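/- If C ≥ 0 is such that for every n ∈ ℕ and all independent random variables X_1,…,X_n with E X_k = 0, E X_k² < ∞ and B_n² = Σ_k E X_k² > 0 one has Δ_n ≤ C·sup_{z>0}( |M_n(z)| + z·L_n(z) ), then C ≥ sup_{1/2<p<1} ( Φ(√((1−p)/p)) − (1−p) )·√(p(1−p)) / ( (1−p)² + p² ), and in particular C > 0.3703. -/

import Mathlib

open MeasureTheory ProbabilityTheory Real Set

/-- The standard normal distribution function. -/
noncomputable def Phi (x : ℝ) : ℝ :=
  ∫ t in Set.Iic x, Real.exp (-t ^ 2 / 2) / Real.sqrt (2 * Real.pi)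

/-- `B_n = sqrt (Σ E X_k²)`. -/
noncomputable def Bn {Ω : Type} [MeasurableSpace Ω] (μ : Measure Ω) {n : ℕ}
    (X : Fin n → Ω → ℝ) : ℝ :=
  Real.sqrt (∑ k, ∫ ω, (X k ω) ^ 2 ∂μ)

/-- Uniform distance between the d.f. of the normalized sum and the standard normal d.f. -/
noncomputable def Deltan {Ω : Type} [MeasurableSpace Ω] (μ : Measure Ω) {n : ℕ}
    (X : Fin n → Ω → ℝ) : ℝ :=
  ⨆ x : ℝ, |(μ {ω | (∑ k, X k ω) / Bn μ X < x}).toReal - Phi x|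

/-- `M_n(z) = B_n⁻³ Σ E[X_k³ 1_{|X_k| < z B_n}]`. -/
noncomputable def Mn {Ω : Type} [MeasurableSpace Ω] (μ : Measure Ω) {n : ℕ}
    (X : Fin n → Ω → ℝ) (z : ℝ) : ℝ :=
  (∑ k, ∫ ω, (if |X k ω| < z * Bn μ X then (X k ω) ^ 3 else 0) ∂μ) / (Bn μ X) ^ 3

/-- `L_n(z) = B_n⁻² Σ E[X_k² 1_{|X_k| ≥ z B_n}]` (the Lindeberg fraction). -/
noncomputable def Lnn {Ω : Type} [MeasurableSpace Ω] (μ : Measure Ω) {n : ℕ}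
    (X : Fin n → Ω → ℝ) (z : ℝ) : ℝ :=
  (∑ k, ∫ ω, (if z * Bn μ X ≤ |X k ω| then (X k ω) ^ 2 else 0) ∂μ) / (Bn μ X) ^ 2

/-- Hypotheses on the independent summands: measurability, independence, zero means,
finite second moments, positive total variance. -/
def GoodFamily {Ω : Type} [MeasurableSpace Ω] (μ : Measure Ω) {n : ℕ}
    (X : Fin n → Ω → ℝ) : Prop :=
  (∀ k, Measurable (X k)) ∧
  iIndepFun X μ ∧
  (∀ k, Integrable (fun ω => (X k ω) ^ 2) μ) ∧
  (∀ k, ∫ ω, X k ω ∂μ = 0) ∧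
  0 < ∑ k, ∫ ω, (X k ω) ^ 2 ∂μ


/-!
Test the inequality on a single centred Bernoulli summand, taking the values `1 - p` and
`-p` with probabilities `p` and `1 - p`. The upper atom of `S / B` is `√((1 - p) / p)`, so
`P(S / B < √((1 - p) / p)) = 1 - p` and `Δ ≥ Φ(√((1 - p) / p)) - (1 - p)`. On the other hand,
for any summands `|M(z)| + z L(z)` is at most the Lyapunov fraction `Σ E|X_k|³ / B³`, because
`|x|³ 1{|x| < c} + c x² 1{|x| ≥ c} ≤ |x|³`; for the Bernoulli summand this fraction is
`((1 - p)² + p²) / √(p (1 - p))`. The numerical bound is the value at `p = 0.61`, close to the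
maximiser `p ≈ 0.609` (maximum `≈ 0.37035`), with `Φ` estimated through the Taylor bound
`e^{-u} ≥ 1 - u + u²/2 - u³/6 - 5u⁴/96` on `[0, 1]`.
-/

lemma gaussianPDFReal_zero_one (t : ℝ) :
    gaussianPDFReal 0 1 t = exp (-t ^ 2 / 2) / √(2 * π) := by
  simp [gaussianPDFReal, div_eq_inv_mul]

lemma Phi_eq_setIntegral_gaussianPDFReal (x : ℝ) :
    Phi x = ∫ t in Iic x, gaussianPDFReal 0 1 t := by
  simp only [Phi, gaussianPDFReal_zero_one]

lemma Phi_nonneg (x : ℝ) : 0 ≤ Phi x := by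
  rw [Phi_eq_setIntegral_gaussianPDFReal]
  exact setIntegral_nonneg measurableSet_Iic fun t _ => gaussianPDFReal_nonneg 0 1 t

lemma Phi_le_one (x : ℝ) : Phi x ≤ 1 := by
  rw [Phi_eq_setIntegral_gaussianPDFReal, ← integral_gaussianPDFReal_eq_one 0 one_ne_zero]
  exact setIntegral_le_integral (integrable_gaussianPDFReal 0 1)
    (Filter.Eventually.of_forall (gaussianPDFReal_nonneg 0 1))

lemma Phi_zero : Phi 0 = 1 / 2 := by
  have hint := integrable_gaussianPDFReal 0 1
  have hsplit := intervalIntegral.integral_Iic_add_Ioi (b := 0) hint.integrableOn hint.integrableOn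
  have hsymm :
      ∫ t in Iic (0 : ℝ), gaussianPDFReal 0 1 t = ∫ t in Ioi 0, gaussianPDFReal 0 1 t := by
    rw [← neg_zero, ← integral_comp_neg_Iic, neg_zero]
    simp only [gaussianPDFReal_zero_one, even_two.neg_pow]
  rw [integral_gaussianPDFReal_eq_one 0 one_ne_zero, ← hsymm] at hsplit
  rw [Phi_eq_setIntegral_gaussianPDFReal]
  linarith

lemma Phi_eq_half_add_setIntegral_Ioc (x : ℝ) (hx : 0 ≤ x) :
    Phi x = 1 / 2 + ∫ t in Ioc 0 x, gaussianPDFReal 0 1 t := by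
  have hint := integrable_gaussianPDFReal 0 1
  rw [← Phi_zero, Phi_eq_setIntegral_gaussianPDFReal, Phi_eq_setIntegral_gaussianPDFReal,
    ← setIntegral_union (Iic_disjoint_Ioc le_rfl) measurableSet_Ioc hint.integrableOn
    hint.integrableOn, Iic_union_Ioc_eq_Iic hx]

lemma taylor_le_exp_neg {u : ℝ} (h0 : 0 ≤ u) (h1 : u ≤ 1) :
    1 - u + u ^ 2 / 2 - u ^ 3 / 6 - 5 * u ^ 4 / 96 ≤ exp (-u) := by
  have h := Real.exp_bound (x := -u) (n := 4) (by rwa [abs_neg, abs_of_nonneg h0]) (by norm_num)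
  rw [abs_neg, abs_of_nonneg h0] at h
  have h' := (abs_le.1 h).1
  simp only [Finset.sum_range_succ, Finset.sum_range_zero, Nat.factorial] at h'
  norm_num at h'
  linarith

lemma setIntegral_Ioc_zero_gaussian_taylor (x : ℝ) (hx : 0 ≤ x) :
    ∫ t in Ioc 0 x, (1 - t ^ 2 / 2 + t ^ 4 / 8 - t ^ 6 / 48 - 5 * t ^ 8 / 1536) =
      x - x ^ 3 / 6 + x ^ 5 / 40 - x ^ 7 / 336 - 5 * x ^ 9 / 13824 := by
  have hderiv : ∀ t : ℝ,
      HasDerivAt (fun t => t - t ^ 3 / 6 + t ^ 5 / 40 - t ^ 7 / 336 - 5 * t ^ 9 / 13824)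
      (1 - t ^ 2 / 2 + t ^ 4 / 8 - t ^ 6 / 48 - 5 * t ^ 8 / 1536) t := fun t => by
    refine (((((hasDerivAt_id t).sub ((hasDerivAt_pow 3 t).div_const 6)).add
      ((hasDerivAt_pow 5 t).div_const 40)).sub ((hasDerivAt_pow 7 t).div_const 336)).sub
      (((hasDerivAt_pow 9 t).const_mul 5).div_const 13824)).congr_deriv ?_
    norm_num
    ring
  rw [← intervalIntegral.integral_of_le hx, intervalIntegral.integral_eq_sub_of_hasDerivAt
    (fun t _ => hderiv t) ((by fun_prop : Continuous fun t : ℝ =>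
      1 - t ^ 2 / 2 + t ^ 4 / 8 - t ^ 6 / 48 - 5 * t ^ 8 / 1536).intervalIntegrable _ _)]
  ring

lemma gaussian_taylor_le_Phi {x : ℝ} (h0 : 0 ≤ x) (h1 : x ≤ 1) :
    1 / 2 + (x - x ^ 3 / 6 + x ^ 5 / 40 - x ^ 7 / 336 - 5 * x ^ 9 / 13824) / √(2 * π) ≤
      Phi x := by
  rw [Phi_eq_half_add_setIntegral_Ioc x h0, ← setIntegral_Ioc_zero_gaussian_taylor x h0,
    ← integral_div]
  refine (add_le_add_iff_left _).2 (setIntegral_mono_on (by fun_prop : Continuous fun t : ℝ =>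
      (1 - t ^ 2 / 2 + t ^ 4 / 8 - t ^ 6 / 48 - 5 * t ^ 8 / 1536) / √(2 * π)).integrableOn_Ioc
    (integrable_gaussianPDFReal 0 1).integrableOn measurableSet_Ioc fun t ht => ?_)
  rw [gaussianPDFReal_zero_one]
  gcongr
  have hu := taylor_le_exp_neg (u := t ^ 2 / 2) (by positivity) (by nlinarith [ht.1, ht.2])
  rw [neg_div]
  linarith

section GeneralBounds

variable {Ω : Type} [MeasurableSpace Ω] {μ : Measure Ω} {n : ℕ} {X : Fin n → Ω → ℝ}

lemma abs_sub_Phi_le_Deltan [IsProbabilityMeasure μ] (x : ℝ) :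
    |(μ {ω | (∑ k, X k ω) / Bn μ X < x}).toReal - Phi x| ≤ Deltan μ X := by
  refine le_ciSup (f := fun x => |(μ {ω | (∑ k, X k ω) / Bn μ X < x}).toReal - Phi x|)
    ⟨1, ?_⟩ x
  rintro _ ⟨y, rfl⟩
  have hprob : (μ {ω | (∑ k, X k ω) / Bn μ X < y}).toReal ≤ 1 :=
    ENNReal.toReal_le_of_le_ofReal zero_le_one (by simpa using prob_le_one)
  have hprob0 : 0 ≤ (μ {ω | (∑ k, X k ω) / Bn μ X < y}).toReal := ENNReal.toReal_nonneg
  have hΦ0 := Phi_nonneg y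
  have hΦ1 := Phi_le_one y
  exact abs_sub_le_iff.2 ⟨by linarith, by linarith⟩

lemma abs_ite_cube_add_mul_ite_sq_le (x c : ℝ) :
    |if |x| < c then x ^ 3 else 0| + c * (if c ≤ |x| then x ^ 2 else 0) ≤ |x| ^ 3 := by
  split_ifs with hlt hle hle
  · linarith
  · simp [abs_pow]
  · calc |0| + c * x ^ 2 ≤ |x| * x ^ 2 := by rw [abs_zero, zero_add]; gcongr
      _ = |x| ^ 3 := by rw [← sq_abs x]; ring
  · exact absurd (lt_of_not_ge hle) hlt

lemma abs_sum_integral_trunc_cube_add_mul_le (hX : ∀ k, Measurable (X k))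
    (hX2 : ∀ k, Integrable (fun ω => X k ω ^ 2) μ)
    (hX3 : ∀ k, Integrable (fun ω => |X k ω| ^ 3) μ)
    (c : ℝ) :
    |∑ k, ∫ ω, (if |X k ω| < c then X k ω ^ 3 else 0) ∂μ| +
        c * ∑ k, ∫ ω, (if c ≤ |X k ω| then X k ω ^ 2 else 0) ∂μ ≤
      ∑ k, ∫ ω, |X k ω| ^ 3 ∂μ := by
  set f : Fin n → Ω → ℝ := fun k ω => if |X k ω| < c then X k ω ^ 3 else 0
  set g : Fin n → Ω → ℝ := fun k ω => if c ≤ |X k ω| then X k ω ^ 2 else 0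
  have hf : ∀ k, Integrable (f k) μ := fun k =>
    (hX3 k).mono (Measurable.ite (measurableSet_lt (hX k).abs measurable_const)
      ((hX k).pow_const 3) measurable_const).aestronglyMeasurable
      (Filter.Eventually.of_forall fun ω => by
        simp only [f, norm_eq_abs, abs_pow, abs_abs]
        split_ifs <;> simp [abs_pow])
  have hg : ∀ k, Integrable (g k) μ := fun k =>
    (hX2 k).mono (Measurable.ite (measurableSet_le measurable_const (hX k).abs)
      ((hX k).pow_const 2) measurable_const).aestronglyMeasurable
      (Filter.Eventually.of_forall fun ω => by
        simp only [g, norm_eq_abs]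
        split_ifs <;> simp [sq_nonneg])
  calc _ ≤ ∑ k, ∫ ω, |f k ω| ∂μ + ∑ k, ∫ ω, c * g k ω ∂μ := by
        rw [Finset.mul_sum]
        simp only [integral_const_mul]
        gcongr
        exact (Finset.abs_sum_le_sum_abs _ _).trans
          (Finset.sum_le_sum fun k _ => abs_integral_le_integral_abs)
    _ = ∑ k, ∫ ω, (|f k ω| + c * g k ω) ∂μ := by
        rw [← Finset.sum_add_distrib]
        exact Finset.sum_congr rfl fun k _ =>
          (integral_add (hf k).abs ((hg k).const_mul c)).symm
    _ ≤ ∑ k, ∫ ω, |X k ω| ^ 3 ∂μ := Finset.sum_le_sum fun k _ =>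
        integral_mono ((hf k).abs.add ((hg k).const_mul c)) (hX3 k) fun ω =>
          abs_ite_cube_add_mul_ite_sq_le (X k ω) c

lemma abs_Mn_add_mul_Lnn_le (hX : ∀ k, Measurable (X k))
    (hX2 : ∀ k, Integrable (fun ω => X k ω ^ 2) μ)
    (hX3 : ∀ k, Integrable (fun ω => |X k ω| ^ 3) μ)
    (z : ℝ) :
    |Mn μ X z| + z * Lnn μ X z ≤ (∑ k, ∫ ω, |X k ω| ^ 3 ∂μ) / Bn μ X ^ 3 := by
  have hB0 : 0 ≤ Bn μ X := Real.sqrt_nonneg _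
  rcases hB0.eq_or_lt with hB | hB
  · simp [Mn, Lnn, ← hB]
  calc |Mn μ X z| + z * Lnn μ X z
      = (|∑ k, ∫ ω, (if |X k ω| < z * Bn μ X then X k ω ^ 3 else 0) ∂μ| +
          z * Bn μ X * ∑ k, ∫ ω, (if z * Bn μ X ≤ |X k ω| then X k ω ^ 2 else 0) ∂μ) /
          Bn μ X ^ 3 := by
        rw [Mn, Lnn, abs_div, abs_of_pos (pow_pos hB 3)]
        field_simp
    _ ≤ (∑ k, ∫ ω, |X k ω| ^ 3 ∂μ) / Bn μ X ^ 3 := by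
        gcongr
        exact abs_sum_integral_trunc_cube_add_mul_le hX hX2 hX3 _

lemma sSup_abs_Mn_add_mul_Lnn_le (hX : ∀ k, Measurable (X k))
    (hX2 : ∀ k, Integrable (fun ω => X k ω ^ 2) μ)
    (hX3 : ∀ k, Integrable (fun ω => |X k ω| ^ 3) μ) :
    sSup ((fun z => |Mn μ X z| + z * Lnn μ X z) '' Ioi 0) ≤
      (∑ k, ∫ ω, |X k ω| ^ 3 ∂μ) / Bn μ X ^ 3 := by
  refine Real.sSup_le ?_ ?_
  · rintro _ ⟨z, -, rfl⟩
    exact abs_Mn_add_mul_Lnn_le hX hX2 hX3 z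
  · have : ∀ k, 0 ≤ ∫ ω, |X k ω| ^ 3 ∂μ := fun k =>
      integral_nonneg fun ω => by positivity
    unfold Bn
    positivity

end GeneralBounds

noncomputable abbrev centeredBernoulli (p : unitInterval) : Measure ℝ :=
  Ber((1 - p : ℝ), -(p : ℝ), p)

section Bernoulli

variable (p : unitInterval)

lemma integral_centeredBernoulli (f : ℝ → ℝ) :
    ∫ x, f x ∂centeredBernoulli p = p * f (1 - p) + (1 - p) * f (-p) :=
  integral_bernoulliMeasure _ _ p f

lemma sum_integral_sq_centeredBernoulli :
    ∑ _ : Fin 1, ∫ x, x ^ 2 ∂centeredBernoulli p = p * (1 - p) := by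
  rw [Fin.sum_univ_one, integral_centeredBernoulli]
  ring

lemma sum_integral_abs_cube_centeredBernoulli :
    ∑ _ : Fin 1, ∫ x, |x| ^ 3 ∂centeredBernoulli p = p * (1 - p) * ((1 - p) ^ 2 + p ^ 2) := by
  rw [Fin.sum_univ_one, integral_centeredBernoulli, abs_neg,
    abs_of_nonneg (unitInterval.nonneg p), abs_of_nonneg (unitInterval.one_minus_nonneg p)]
  ring

lemma Bn_centeredBernoulli :
    Bn (centeredBernoulli p) (fun _ : Fin 1 => id) = √(p * (1 - p)) := by
  rw [Bn, ← sum_integral_sq_centeredBernoulli]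
  rfl

variable {p}

lemma goodFamily_centeredBernoulli (h0 : 0 < (p : ℝ)) (h1 : (p : ℝ) < 1) :
    GoodFamily (centeredBernoulli p) (fun _ : Fin 1 => id) := by
  refine ⟨fun _ => measurable_id, iIndepFun.of_subsingleton,
    fun _ => integrable_bernoulliMeasure _ _ _ _, fun _ => ?_, ?_⟩
  · rw [integral_centeredBernoulli]
    simp only [id]
    ring
  · change 0 < ∑ _ : Fin 1, ∫ x, x ^ 2 ∂centeredBernoulli p
    rw [sum_integral_sq_centeredBernoulli]
    nlinarith

lemma toReal_centeredBernoulli_sum_div_Bn_lt_sqrt (h0 : 0 < (p : ℝ)) (h1 : (p : ℝ) < 1) :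
    (centeredBernoulli p
      {x | (∑ _ : Fin 1, id x) / Bn (centeredBernoulli p) (fun _ : Fin 1 => id) <
        √((1 - p) / p)}).toReal = 1 - p := by
  have hq : 0 < 1 - (p : ℝ) := by linarith
  have hB : 0 < √(p * (1 - p) : ℝ) := by positivity
  have hatom : (1 - p) / √(p * (1 - p) : ℝ) = √((1 - p) / p) := by
    rw [div_eq_iff hB.ne', ← Real.sqrt_mul (by positivity),
      show (1 - p) / p * (p * (1 - p)) = (1 - p : ℝ) ^ 2 by field_simp, Real.sqrt_sq hq.le]
  simp only [Fin.sum_univ_one, id, Bn_centeredBernoulli]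
  rw [← measureReal_def, bernoulliMeasure_real_apply_of_notMem_of_mem]
  · exact measurableSet_lt (by fun_prop) measurable_const
  · simp [hatom]
  · exact (div_neg_of_neg_of_pos (neg_neg_of_pos h0) hB).trans_le (Real.sqrt_nonneg _)

end Bernoulli

def EsseenInequality (C : ℝ) : Prop :=
  ∀ (Ω : Type) [MeasurableSpace Ω] (μ : Measure Ω) [IsProbabilityMeasure μ]
    (n : ℕ) (X : Fin n → Ω → ℝ), GoodFamily μ X →
      Deltan μ X ≤ C * sSup ((fun z => |Mn μ X z| + z * Lnn μ X z) '' Ioi 0)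

noncomputable def esseenRatio (p : ℝ) : ℝ :=
  (Phi (√((1 - p) / p)) - (1 - p)) * √(p * (1 - p)) / ((1 - p) ^ 2 + p ^ 2)

lemma esseenRatio_le {C : ℝ} (hC : 0 ≤ C) (hEsseen : EsseenInequality C) {p : ℝ}
    (hp : p ∈ Ioo 0 1) : esseenRatio p ≤ C := by
  lift p to unitInterval using Ioo_subset_Icc_self hp
  obtain ⟨h0, h1⟩ := hp
  set X : Fin 1 → ℝ → ℝ := fun _ => id
  have hvar : 0 < (p * (1 - p) : ℝ) := mul_pos h0 (sub_pos.2 h1)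
  have hB : 0 < √(p * (1 - p) : ℝ) := Real.sqrt_pos.2 hvar
  have hlower : Phi (√((1 - p) / p)) - (1 - p) ≤ Deltan (centeredBernoulli p) X := by
    have h := abs_sub_Phi_le_Deltan (μ := centeredBernoulli p) (X := X) (√((1 - p) / p))
    rw [toReal_centeredBernoulli_sum_div_Bn_lt_sqrt h0 h1, abs_sub_comm] at h
    exact (le_abs_self _).trans h
  have hupper : sSup ((fun z => |Mn (centeredBernoulli p) X z| +
      z * Lnn (centeredBernoulli p) X z) '' Ioi 0) ≤
        ((1 - p) ^ 2 + p ^ 2) / √(p * (1 - p)) := by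
    refine (sSup_abs_Mn_add_mul_Lnn_le (fun _ => measurable_id)
      (fun _ => integrable_bernoulliMeasure _ _ _ _)
      (fun _ => integrable_bernoulliMeasure _ _ _ _)).trans_eq ?_
    change (∑ _ : Fin 1, ∫ x, |x| ^ 3 ∂centeredBernoulli p) /
      Bn (centeredBernoulli p) X ^ 3 = _
    rw [sum_integral_abs_cube_centeredBernoulli, Bn_centeredBernoulli,
      show √(p * (1 - p) : ℝ) ^ 3 = p * (1 - p) * √(p * (1 - p)) by
        rw [pow_succ, Real.sq_sqrt hvar.le]]
    field_simp
  have hΔ := hEsseen ℝ (centeredBernoulli p) 1 X (goodFamily_centeredBernoulli h0 h1)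
  rw [esseenRatio, div_le_iff₀ (by positivity)]
  calc (Phi (√((1 - p) / p)) - (1 - p)) * √(p * (1 - p))
        ≤ C * (((1 - p) ^ 2 + p ^ 2) / √(p * (1 - p))) * √(p * (1 - p)) := by
        gcongr
        exact hlower.trans (hΔ.trans (by gcongr))
    _ = C * ((1 - p) ^ 2 + p ^ 2) := by field_simp

lemma lt_esseenRatio_sixty_one_hundredths : 0.3703 < esseenRatio (61 / 100) := by
  rw [esseenRatio]
  set x := √((1 - 61 / 100) / (61 / 100) : ℝ)
  have hx2 : x ^ 2 = 39 / 61 := by rw [Real.sq_sqrt] <;> norm_num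
  have hx_ge : 0.79959 ≤ x := (Real.le_sqrt (by norm_num) (by norm_num)).2 (by norm_num)
  have hx_le : x ≤ 1 := Real.sqrt_le_one.2 (by norm_num)
  have hsqrt_two_pi : √(2 * π) ≤ 2.50663 :=
    (Real.sqrt_le_left (by norm_num)).2 (by nlinarith [Real.pi_lt_d6])
  have hB : 0.48774 ≤ √(61 / 100 * (1 - 61 / 100) : ℝ) :=
    (Real.le_sqrt (by norm_num) (by norm_num)).2 (by norm_num)
  set r : ℝ :=
    1 - 39 / 61 / 6 + (39 / 61) ^ 2 / 40 - (39 / 61) ^ 3 / 336 - 5 * (39 / 61) ^ 4 / 13824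
  have hPhi : 1 / 2 + 0.79959 * r / 2.50663 ≤ Phi x := by
    refine le_trans ?_ (gaussian_taylor_le_Phi (Real.sqrt_nonneg _) hx_le)
    rw [show x - x ^ 3 / 6 + x ^ 5 / 40 - x ^ 7 / 336 - 5 * x ^ 9 / 13824 = x * (1 - x ^ 2 / 6 +
      (x ^ 2) ^ 2 / 40 - (x ^ 2) ^ 3 / 336 - 5 * (x ^ 2) ^ 4 / 13824) by ring, hx2]
    gcongr
  calc (0.3703 : ℝ) < (1 / 2 + 0.79959 * r / 2.50663 - (1 - 61 / 100)) * 0.48774 /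
        ((1 - 61 / 100) ^ 2 + (61 / 100) ^ 2) := by norm_num [r]
    _ ≤ _ := by
      gcongr
      linarith [(by norm_num [r] : (39 / 100 : ℝ) ≤ 1 / 2 + 0.79959 * r / 2.50663)]

theorem lower_bound_esseen_eps_infty (C : ℝ) (hC : 0 ≤ C)
    (h : ∀ (Ω : Type) (mΩ : MeasurableSpace Ω) (μ : Measure Ω), IsProbabilityMeasure μ →
      ∀ (n : ℕ) (X : Fin n → Ω → ℝ), GoodFamily μ X →
        Deltan μ X ≤
          C * sSup ((fun z => |Mn μ X z| + z * Lnn μ X z) '' Set.Ioi (0 : ℝ))) :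
    sSup ((fun p => (Phi (Real.sqrt ((1 - p) / p)) - (1 - p)) * Real.sqrt (p * (1 - p)) /
        ((1 - p) ^ 2 + p ^ 2)) '' Set.Ioo (1/2 : ℝ) 1) ≤ C ∧
    0.3703 < C := by
  have hratio : ∀ p ∈ Ioo (1 / 2 : ℝ) 1, esseenRatio p ≤ C := fun p hp =>
    esseenRatio_le hC h ⟨by linarith [hp.1], hp.2⟩
  refine ⟨Real.sSup_le ?_ hC, lt_esseenRatio_sixty_one_hundredths.trans_le
    (hratio _ ⟨by norm_num, by norm_num⟩)⟩
  rintro _ ⟨p, hp, rfl⟩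
  exact hratio p hp
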